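/- arXiv:math/0506303 — 3 statements merged into one kernel-verified Lean document; each statement's English description precedes it below -/
import Mathlib

section
/- Let γ be the growth function of the Mealy automaton A₂. Then γ(1) = 2, γ(2) = 4, γ(3) = 7, and for every integer n ≥ 2, γ(2n) = 8 and γ(2n+1) = 9. In particular γ is non-monotonic (γ(2n+1) = 9 > 8 = γ(2n+2) for n ≥ 2) and of constant growth order. -/
/-!
The semigroup generated by `f_{q0}` and `f_{q1}` has 37 elements and is closed under taking
sections, so it is itself the state set of a Mealy automaton (`a2SemTr`, `a2SemOut`), in which
left multiplication by a generator is the map `a2SemMul`. Four input words of length at most five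
separate its states, so `γ(n + 1)` is the number of elements that are products of exactly `n + 1`
generators. Iterating left multiplication, these sets repeat with period 4 from length 6 on,
and their sizes alternate between 8 and 9.
-/

/-- The sequence of states visited by a Mealy automaton with transition function `tr`,
started at state `q`, while reading the infinite word `u`. -/
def stateSeq {X Q : Type*} (tr : X → Q → Q) (q : Q) (u : ℕ → X) : ℕ → Q
  | 0 => q
  | k + 1 => tr (u k) (stateSeq tr q u k)

/-- The automatic transformation of infinite words defined by the Mealy automaton with
transition function `tr` and output function `out` at the state `q`. -/
def autTrans {X Q : Type*} (tr : X → Q → Q) (out : X → Q → X) (q : Q) (u : ℕ → X) : ℕ → X :=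
  fun n => out (u n) (stateSeq tr q u n)

/-- The transformation given by a word of states: the product (composition, applied from
right to left) of the corresponding automatic transformations. -/
def wordTrans {X Q : Type*} (tr : X → Q → Q) (out : X → Q → X) (w : List Q) :
    (ℕ → X) → (ℕ → X) :=
  (w.map (autTrans tr out)).foldr (· ∘ ·) id

/-- The growth function of a Mealy automaton: `growth tr out n` is the number of distinct
transformations of infinite words obtained as compositions of exactly `n` automatic
transformations of the automaton. -/
noncomputable def growth {X Q : Type*} (tr : X → Q → Q) (out : X → Q → X) (n : ℕ) : ℕ :=
  Set.ncard { g : (ℕ → X) → (ℕ → X) | ∃ w : List Q, w.length = n ∧ wordTrans tr out w = g }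

/-- The `i`-th finite difference of a function `γ`. -/
def fdiff (γ : ℕ → ℤ) : ℕ → ℕ → ℤ
  | 0, n => γ n
  | i + 1, n => fdiff γ i n - fdiff γ i (n - 1)

/-- Output function of the automaton `A₂`: at `q0` the outputs of `(x0,x1,x2,x3)` are
`(x1,x1,x0,x0)`; at `q1` they are `(x0,x2,x0,x1)`. -/
def a2Out : Fin 4 → Fin 2 → Fin 4 := fun x q =>
  if q = 0 then (if x = 0 then 1 else if x = 1 then 1 else 0)
  else (if x = 0 then 0 else if x = 1 then 2 else if x = 2 then 0 else 1)

/-- Transition function of the automaton `A₂`: all transitions from `q0` stay at `q0`;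
from `q1` the transition goes to `q0` on reading `x0` and stays at `q1` otherwise. -/
def a2Tr : Fin 4 → Fin 2 → Fin 2 := fun x q =>
  if q = 0 then 0 else (if x = 0 then 0 else 1)

variable {X Q S : Type*}

theorem stateSeq_map (tr : X → Q → Q) (tr' : X → S → S) (f : Q → S)
    (htr : ∀ x q, tr' x (f q) = f (tr x q)) (q : Q) (u : ℕ → X) (n : ℕ) :
    stateSeq tr' (f q) u n = f (stateSeq tr q u n) := by
  induction n with
  | zero => rfl
  | succ n ih => simp only [stateSeq, ih, htr]

theorem autTrans_map (tr : X → Q → Q) (out : X → Q → X) (tr' : X → S → S) (out' : X → S → X)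
    (f : Q → S) (htr : ∀ x q, tr' x (f q) = f (tr x q)) (hout : ∀ x q, out' x (f q) = out x q)
    (q : Q) : autTrans tr' out' (f q) = autTrans tr out q := by
  funext u n
  simp only [autTrans, stateSeq_map tr tr' f htr, hout]

/-- The hypotheses are the wreath recursion of the product `q * s`: its output is `q (s x)` and
its section at `x` is `q|_{s x} * s|_x`. -/
theorem autTrans_comp_autTrans (tr : X → Q → Q) (out : X → Q → X) (tr' : X → S → S)
    (out' : X → S → X) (ℓ : Q → S → S)
    (htr : ∀ x q s, tr' x (ℓ q s) = ℓ (tr (out' x s) q) (tr' x s))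
    (hout : ∀ x q s, out' x (ℓ q s) = out (out' x s) q) (q : Q) (s : S) :
    autTrans tr out q ∘ autTrans tr' out' s = autTrans tr' out' (ℓ q s) := by
  funext u n
  have hstate : ∀ n, stateSeq tr' (ℓ q s) u n =
      ℓ (stateSeq tr q (autTrans tr' out' s u) n) (stateSeq tr' s u n) := by
    intro n
    induction n with
    | zero => rfl
    | succ n ih => simp only [stateSeq, ih, htr, autTrans]
  simp only [Function.comp, autTrans, hstate, hout]

section ProductLayer

variable [Fintype Q] [DecidableEq S]

/-- The elements of a finite model `S` of the semigroup of an automaton with state set `Q`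
that are products of exactly `n + 1` generators. -/
def productLayer (ι : Q → S) (ℓ : Q → S → S) (n : ℕ) : Finset S :=
  (Finset.image₂ ℓ Finset.univ)^[n] (Finset.univ.image ι)

theorem productLayer_succ (ι : Q → S) (ℓ : Q → S → S) (n : ℕ) :
    productLayer ι ℓ (n + 1) = Finset.image₂ ℓ Finset.univ (productLayer ι ℓ n) :=
  Function.iterate_succ_apply' _ _ _

theorem productLayer_add_of_periodic {ι : Q → S} {ℓ : Q → S → S}
    {p n₀ n : ℕ} (hp : productLayer ι ℓ (n₀ + p) = productLayer ι ℓ n₀) (hn : n₀ ≤ n) :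
    productLayer ι ℓ (n + p) = productLayer ι ℓ n := by
  obtain ⟨k, rfl⟩ := Nat.exists_eq_add_of_le' hn
  simp only [productLayer, add_assoc, Function.iterate_add_apply] at hp ⊢
  rw [hp]

variable {tr : X → Q → Q} {out : X → Q → X}
  {T : S → (ℕ → X) → (ℕ → X)} {ι : Q → S} {ℓ : Q → S → S}

theorem setOf_wordTrans_eq_image (hι : ∀ q, autTrans tr out q = T (ι q))
    (hℓ : ∀ q s, autTrans tr out q ∘ T s = T (ℓ q s)) (n : ℕ) :
    {g | ∃ w : List Q, w.length = n + 1 ∧ wordTrans tr out w = g} =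
      T '' ↑(productLayer ι ℓ n) := by
  induction n with
  | zero =>
    ext g
    simp [productLayer, List.length_eq_one_iff, wordTrans, hι]
  | succ n ih =>
    ext g
    simp only [Set.mem_ofPred_eq, productLayer_succ, Finset.coe_image₂, Set.mem_image,
      Set.mem_image2, Finset.coe_univ, Set.mem_univ, true_and]
    constructor
    · rintro ⟨_ | ⟨q, w⟩, hw, rfl⟩
      · simp at hw
      obtain ⟨s, hs, hsw⟩ : wordTrans tr out w ∈ T '' ↑(productLayer ι ℓ n) :=
        ih ▸ ⟨w, by simpa using hw, rfl⟩
      exact ⟨_, ⟨q, s, hs, rfl⟩, by rw [← hℓ, hsw]; rfl⟩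
    · rintro ⟨_, ⟨q, s, hs, rfl⟩, rfl⟩
      obtain ⟨w, hw, hws⟩ :
          T s ∈ {g | ∃ w : List Q, w.length = n + 1 ∧ wordTrans tr out w = g} :=
        ih ▸ ⟨s, hs, rfl⟩
      exact ⟨q :: w, by simp [hw], by rw [← hℓ, ← hws]; rfl⟩

theorem growth_succ_eq_card (hT : Function.Injective T) (hι : ∀ q, autTrans tr out q = T (ι q))
    (hℓ : ∀ q s, autTrans tr out q ∘ T s = T (ℓ q s)) (n : ℕ) :
    growth tr out (n + 1) = (productLayer ι ℓ n).card := by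
  rw [growth, setOf_wordTrans_eq_image hι hℓ, Set.ncard_image_of_injective _ hT,
    Set.ncard_coe_finset]

end ProductLayer

/-- States are the elements of the semigroup of `A₂`; `0` and `1` are `f_{q0}` and `f_{q1}`. -/
def a2SemOut : Fin 4 → Fin 37 → Fin 4 :=
  ![![1, 0, 1, 1, 2, 0, 0, 1, 2, 2, 0, 0, 0, 0, 0, 2, 0, 0, 1, 0, 0, 0, 0, 1, 2, 0, 0, 0, 1, 2, 0, 0, 0, 2, 0, 0, 0],
    ![1, 2, 1, 0, 2, 0, 0, 1, 2, 0, 0, 0, 0, 1, 0, 2, 0, 0, 1, 0, 2, 0, 0, 0, 2, 0, 0, 0, 1, 0, 0, 0, 1, 2, 0, 0, 0],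
    ![0, 0, 1, 1, 0, 0, 1, 1, 2, 2, 0, 0, 0, 0, 2, 2, 0, 0, 0, 0, 0, 0, 0, 1, 0, 0, 0, 1, 1, 2, 0, 0, 0, 2, 0, 0, 0],
    ![0, 1, 1, 1, 0, 2, 1, 0, 2, 2, 0, 0, 0, 0, 2, 0, 0, 0, 0, 1, 0, 0, 0, 1, 0, 2, 0, 1, 0, 2, 0, 0, 0, 0, 0, 1, 0]]

def a2SemTr : Fin 4 → Fin 37 → Fin 37 :=
  ![![0, 0, 2, 2, 4, 2, 6, 2, 8, 8, 10, 2, 12, 12, 2, 8, 12, 2, 2, 12, 2, 2, 12, 2, 8, 2, 2, 12, 2, 8, 12, 2, 12, 8, 12, 12, 12],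
    ![0, 1, 2, 3, 4, 5, 6, 7, 8, 2, 10, 7, 12, 2, 2, 15, 2, 2, 2, 19, 8, 2, 22, 12, 8, 2, 12, 12, 2, 2, 12, 2, 2, 8, 2, 12, 12],
    ![0, 1, 2, 3, 2, 3, 2, 2, 8, 9, 2, 2, 12, 13, 8, 8, 16, 2, 12, 12, 2, 12, 12, 2, 2, 2, 2, 2, 2, 8, 2, 2, 12, 8, 12, 12, 12],
    ![0, 1, 2, 3, 2, 5, 2, 7, 8, 9, 2, 11, 12, 13, 8, 2, 16, 2, 12, 2, 2, 12, 2, 2, 2, 8, 2, 2, 12, 8, 2, 12, 12, 2, 12, 2, 2]]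

def a2SemMul : Fin 2 → Fin 37 → Fin 37 :=
  ![![2, 3, 2, 2, 6, 7, 2, 2, 12, 13, 2, 2, 2, 2, 18, 19, 2, 2, 2, 2, 23, 2, 2, 2, 27, 28, 2, 2, 2, 32, 2, 2, 2, 35, 2, 2, 2],
    ![4, 5, 8, 9, 10, 11, 14, 15, 12, 16, 17, 17, 17, 20, 21, 22, 17, 17, 24, 25, 26, 17, 17, 29, 30, 31, 17, 14, 33, 34, 17, 17, 20, 36, 17, 25, 17]]

def a2SemGen : Fin 2 → Fin 37 := Fin.castLE (by decide)

theorem autTrans_a2SemGen (q : Fin 2) :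
    autTrans a2SemTr a2SemOut (a2SemGen q) = autTrans a2Tr a2Out q :=
  autTrans_map _ _ _ _ _ (by decide) (by decide) q

theorem autTrans_a2_comp_autTrans_a2Sem (q : Fin 2) (s : Fin 37) :
    autTrans a2Tr a2Out q ∘ autTrans a2SemTr a2SemOut s =
      autTrans a2SemTr a2SemOut (a2SemMul q s) :=
  autTrans_comp_autTrans _ _ _ _ _ (by decide) (by decide) q s

theorem autTrans_a2Sem_injective : Function.Injective (autTrans a2SemTr a2SemOut) := by
  let outputsOnTests : ((ℕ → Fin 4) → (ℕ → Fin 4)) → List (List (Fin 4)) := fun g =>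
    [[1, 1, 3, 1, 2], [2, 1, 0], [0, 0], [3, 0]].map fun t =>
      (List.range t.length).map (g (t.getD · 0))
  exact Function.Injective.of_comp (f := outputsOnTests) (by decide)

abbrev a2Layer : ℕ → Finset (Fin 37) := productLayer a2SemGen a2SemMul

theorem a2Layer_add_four {n : ℕ} (hn : 5 ≤ n) : a2Layer (n + 4) = a2Layer n :=
  productLayer_add_of_periodic (by decide) hn

theorem card_a2Layer (m : ℕ) :
    (a2Layer (2 * m + 3)).card = 8 ∧ (a2Layer (2 * m + 4)).card = 9 := by
  induction m using Nat.strong_induction_on with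
  | _ m ih =>
    match m with
    | 0 | 1 | 2 => decide
    | k + 3 =>
      rw [show 2 * (k + 3) + 3 = 2 * (k + 1) + 3 + 4 by ring,
        show 2 * (k + 3) + 4 = 2 * (k + 1) + 4 + 4 by ring,
        a2Layer_add_four (by omega), a2Layer_add_four (by omega)]
      exact ih (k + 1) (by omega)

theorem growth_a2_succ (n : ℕ) : growth a2Tr a2Out (n + 1) = (a2Layer n).card :=
  growth_succ_eq_card autTrans_a2Sem_injective (fun q => (autTrans_a2SemGen q).symm)
    autTrans_a2_comp_autTrans_a2Sem n

/-- The growth function `γ` of `A₂` satisfies `γ(1) = 2`, `γ(2) = 4`, `γ(3) = 7`, and for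
every `n ≥ 2`, `γ(2n) = 8` and `γ(2n+1) = 9`; in particular `γ` is non-monotonic
(`γ(2n+1) = 9 > 8 = γ(2n+2)` for `n ≥ 2`) and of constant growth order. -/
theorem growth_a2 :
    growth a2Tr a2Out 1 = 2 ∧ growth a2Tr a2Out 2 = 4 ∧ growth a2Tr a2Out 3 = 7 ∧
    (∀ n : ℕ, 2 ≤ n → growth a2Tr a2Out (2 * n) = 8 ∧ growth a2Tr a2Out (2 * n + 1) = 9) ∧
    (∀ n : ℕ, 2 ≤ n → growth a2Tr a2Out (2 * n + 2) < growth a2Tr a2Out (2 * n + 1)) := by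
  have hlong (n : ℕ) (hn : 2 ≤ n) :
      growth a2Tr a2Out (2 * n) = 8 ∧ growth a2Tr a2Out (2 * n + 1) = 9 := by
    obtain ⟨m, rfl⟩ := Nat.exists_eq_add_of_le' hn
    rw [show 2 * (m + 2) = 2 * m + 3 + 1 by ring, growth_a2_succ, growth_a2_succ]
    exact card_a2Layer m
  refine ⟨?_, ?_, ?_, hlong, fun n hn => ?_⟩
  · rw [growth_a2_succ 0]; decide
  · rw [growth_a2_succ 1]; decide
  · rw [growth_a2_succ 2]; decide
  · rw [show 2 * n + 2 = 2 * (n + 1) by ring, (hlong (n + 1) (by omega)).1, (hlong n hn).2]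
    norm_num
end

section
/- Let f0, f1 be the automatic transformations of the Mealy automaton A₂, with products written so that (f g)(u) = f(g(u)). Then the following equalities of transformations of infinite words over Fin 4 hold: f0² f0 = f0² f1 = f0²; f0 f1² f0 = f0 f1² f1 = f0²; f1² f0² = f0 f1 f0²; f1 f0 f1 f0² = f1⁴ = f1³ f0; and (f1 f0)⁴ = (f1 f0)². -/
/-- The automatic transformations `f0, f1` of the automaton `A₂` at states `q0, q1`. -/
def a2F (q : Fin 2) : (ℕ → Fin 4) → (ℕ → Fin 4) := autTrans a2Tr a2Out q


/-! Composition of automatic transformations is again automatic: `f_p ∘ f_q` is the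
transformation at the state `(p, q)` of the product automaton, which feeds the output of the
second automaton into the first. So each side of every relation is a single automatic
transformation, and two states define the same transformation as soon as they are related by
a bisimulation: a relation preserved by all transitions on which the outputs agree. The finitely
many pairs of states reachable from the initial pair form such a relation once the outputs
agree on them; for each relation these pairs are listed and checked directly. -/

section Composition

variable {X Q₁ Q₂ : Type*}

def compTr (tr₁ : X → Q₁ → Q₁) (tr₂ : X → Q₂ → Q₂) (out₂ : X → Q₂ → X) :
    X → Q₁ × Q₂ → Q₁ × Q₂ :=
  fun x p => (tr₁ (out₂ x p.2) p.1, tr₂ x p.2)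

def compOut (out₁ : X → Q₁ → X) (out₂ : X → Q₂ → X) : X → Q₁ × Q₂ → X :=
  fun x p => out₁ (out₂ x p.2) p.1

variable {tr₁ : X → Q₁ → Q₁} {out₁ : X → Q₁ → X} {tr₂ : X → Q₂ → Q₂} {out₂ : X → Q₂ → X}

theorem stateSeq_compTr (q₁ : Q₁) (q₂ : Q₂) (u : ℕ → X) (n : ℕ) :
    stateSeq (compTr tr₁ tr₂ out₂) (q₁, q₂) u n =
      (stateSeq tr₁ q₁ (autTrans tr₂ out₂ q₂ u) n, stateSeq tr₂ q₂ u n) := by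
  induction n with
  | zero => rfl
  | succ k ih => simp only [stateSeq, ih, compTr, autTrans]

theorem autTrans_comp (q₁ : Q₁) (q₂ : Q₂) :
    autTrans tr₁ out₁ q₁ ∘ autTrans tr₂ out₂ q₂ =
      autTrans (compTr tr₁ tr₂ out₂) (compOut out₁ out₂) (q₁, q₂) := by
  funext u n
  simp only [Function.comp_apply, autTrans, stateSeq_compTr, compOut]

theorem autTrans_eq_of_bisim (R : Q₁ → Q₂ → Prop) {q₁ : Q₁} {q₂ : Q₂} (h₀ : R q₁ q₂)
    (hR : ∀ p₁ p₂, R p₁ p₂ → ∀ x, out₁ x p₁ = out₂ x p₂ ∧ R (tr₁ x p₁) (tr₂ x p₂)) :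
    autTrans tr₁ out₁ q₁ = autTrans tr₂ out₂ q₂ := by
  funext u n
  have hreach : ∀ k, R (stateSeq tr₁ q₁ u k) (stateSeq tr₂ q₂ u k) := by
    intro k
    induction k with
    | zero => exact h₀
    | succ k ih => exact (hR _ _ ih (u k)).2
  exact (hR _ _ (hreach n) (u n)).1

theorem autTrans_eq_of_closed_list {q₁ : Q₁} {q₂ : Q₂} (L : List (Q₁ × Q₂)) (h₀ : (q₁, q₂) ∈ L)
    (hL : ∀ p ∈ L, ∀ x, out₁ x p.1 = out₂ x p.2 ∧ (tr₁ x p.1, tr₂ x p.2) ∈ L) :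
    autTrans tr₁ out₁ q₁ = autTrans tr₂ out₂ q₂ :=
  autTrans_eq_of_bisim (fun p₁ p₂ => (p₁, p₂) ∈ L) h₀ fun _ _ h => hL _ h

end Composition

/-- The defining relations of the semigroup `S_{A₂}` hold among the automatic
transformations `f0, f1` of `A₂` (products composed from right to left). -/
theorem relations_a2 :
    a2F 0 ∘ a2F 0 ∘ a2F 0 = a2F 0 ∘ a2F 0 ∧
    a2F 0 ∘ a2F 0 ∘ a2F 1 = a2F 0 ∘ a2F 0 ∧
    a2F 0 ∘ a2F 1 ∘ a2F 1 ∘ a2F 0 = a2F 0 ∘ a2F 0 ∧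
    a2F 0 ∘ a2F 1 ∘ a2F 1 ∘ a2F 1 = a2F 0 ∘ a2F 0 ∧
    a2F 1 ∘ a2F 1 ∘ a2F 0 ∘ a2F 0 = a2F 0 ∘ a2F 1 ∘ a2F 0 ∘ a2F 0 ∧
    a2F 1 ∘ a2F 0 ∘ a2F 1 ∘ a2F 0 ∘ a2F 0 = a2F 1 ∘ a2F 1 ∘ a2F 1 ∘ a2F 1 ∧
    a2F 1 ∘ a2F 1 ∘ a2F 1 ∘ a2F 1 = a2F 1 ∘ a2F 1 ∘ a2F 1 ∘ a2F 0 ∧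
    (a2F 1 ∘ a2F 0)^[4] = (a2F 1 ∘ a2F 0)^[2] := by
  simp only [Function.iterate_succ', Function.iterate_zero, Function.comp_id, a2F,
    autTrans_comp]
  refine ⟨autTrans_eq_of_closed_list [((0, (0, 0)), (0, 0))] ?_ ?_,
    autTrans_eq_of_closed_list [((0, (0, 1)), (0, 0)), ((0, (0, 0)), (0, 0))] ?_ ?_,
    autTrans_eq_of_closed_list [((0, (1, (1, 0))), (0, 0)), ((0, (0, (0, 0))), (0, 0))] ?_ ?_,
    autTrans_eq_of_closed_list [((0, (1, (1, 1))), (0, 0)), ((0, (0, (0, 0))), (0, 0)),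
      ((0, (0, (1, 1))), (0, 0)), ((0, (0, (0, 1))), (0, 0))] ?_ ?_,
    autTrans_eq_of_closed_list [((1, (1, (0, 0))), (0, (1, (0, 0))))] ?_ ?_,
    autTrans_eq_of_closed_list [((1, (0, (1, (0, 0)))), (1, (1, (1, 1)))),
      ((0, (0, (1, (0, 0)))), (0, (0, (0, 0)))), ((0, (0, (1, (0, 0)))), (0, (0, (1, 1)))),
      ((0, (0, (1, (0, 0)))), (0, (0, (0, 1)))), ((0, (0, (1, (0, 0)))), (0, (1, (1, 1))))] ?_ ?_,
    autTrans_eq_of_closed_list [((1, (1, (1, 1))), (1, (1, (1, 0)))),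
      ((0, (0, (0, 0))), (0, (1, (1, 0)))), ((0, (0, (1, 1))), (0, (1, (1, 0)))),
      ((0, (0, (0, 1))), (0, (0, (0, 0)))), ((0, (1, (1, 1))), (0, (0, (0, 0)))),
      ((0, (0, (0, 0))), (0, (0, (0, 0)))), ((0, (0, (1, 1))), (0, (0, (0, 0))))] ?_ ?_,
    autTrans_eq_of_closed_list [(((1, 0), ((1, 0), ((1, 0), (1, 0)))), ((1, 0), (1, 0))),
      (((0, 0), ((1, 0), ((0, 0), (1, 0)))), ((0, 0), (1, 0))),
      (((1, 0), ((0, 0), ((1, 0), (0, 0)))), ((1, 0), (0, 0))),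
      (((0, 0), ((1, 0), ((0, 0), (0, 0)))), ((0, 0), (0, 0)))] ?_ ?_⟩ <;> decide
end

section
/- For n ≥ 1 let d(n) be the number of partitions of n into 'sequential' powers of 2, i.e. the number of tuples (p₀, p₁, …, p_k) with k ≥ 0, p_i ≥ 1 for all 0 ≤ i ≤ k, and Σ_{i=0}^{k} p_i·2^i = n; set d(0) = 1. Then for every integer n ≥ 3, d(n) = Σ_{i=0}^{⌊(n−1)/2⌋} d(i). -/
/-- `seqPartCount n` is the number of partitions of `n` into "sequential" powers of `2`:
the number of tuples `(p₀, p₁, …, p_k)` with `k ≥ 0`, `p_i ≥ 1` for all `i`, and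
`Σ_{i=0}^{k} p_i·2^i = n`, encoded as nonempty lists of positive integers; by convention
`seqPartCount 0 = 1`. -/
noncomputable def seqPartCount (n : ℕ) : ℕ :=
  if n = 0 then 1 else
    Set.ncard { l : List ℕ | l ≠ [] ∧ (∀ p ∈ l, 1 ≤ p) ∧
      (l.mapIdx fun i p => p * 2 ^ i).sum = n }

/-!
Removing the first part `p₀` of a sequential partition of `n ≥ 1` leaves a sequential partition
`(p₁, …, p_k)` of the `m` with `n = p₀ + 2m`, the empty tuple when `m = 0` (which is what the
convention `d(0) = 1` counts). Since `p₀ ≥ 1` means `m ≤ (n - 1) / 2`, the partitions of `n`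
split into disjoint blocks indexed by `0 ≤ m ≤ (n - 1) / 2`, the `m`-th one in bijection with the
partitions of `m` via `p₀ = n - 2m`.
-/

namespace SeqPartCount

open Nat

/-- Sequential partitions with the weight `Σ pᵢ 2^i` written as `Nat.ofDigits 2`; unlike in
`seqPartCount`, the empty list is admitted, as the only partition of `0`. -/
def seqParts (n : ℕ) : Set (List ℕ) :=
  {l | (∀ p ∈ l, 1 ≤ p) ∧ ofDigits 2 l = n}

lemma seqParts_zero : seqParts 0 = {[]} := by
  ext l
  cases l with
  | nil => simp [seqParts, ofDigits_nil]
  | cons a t =>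
    simp only [seqParts, Set.mem_ofPred_eq, Set.mem_singleton_iff, reduceCtorEq, iff_false,
      List.mem_cons, forall_eq_or_imp, ofDigits_cons]
    omega

lemma seqPartCount_eq_ncard_seqParts (n : ℕ) : seqPartCount n = (seqParts n).ncard := by
  rcases eq_or_ne n 0 with rfl | hn
  · simp [seqPartCount, seqParts_zero]
  rw [seqPartCount, if_neg hn]
  congr 1
  ext l
  simp only [seqParts, Set.mem_ofPred_eq, ← ofDigits_eq_sum_mapIdx]
  refine ⟨fun h => h.2, fun h => ⟨?_, h⟩⟩
  rintro rfl
  exact hn (h.2 ▸ ofDigits_nil)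

lemma seqParts_eq_biUnion {n : ℕ} (hn : n ≠ 0) :
    seqParts n = ⋃ m ∈ Finset.range ((n - 1) / 2 + 1), List.cons (n - 2 * m) '' seqParts m := by
  ext l
  cases l with
  | nil => simpa [seqParts, ofDigits_nil] using hn.symm
  | cons a t =>
    simp only [seqParts, Set.mem_iUnion, Set.mem_image, Set.mem_ofPred_eq, List.mem_cons,
      forall_eq_or_imp, ofDigits_cons, List.cons.injEq, Finset.mem_range]
    constructor
    · rintro ⟨⟨ha, ht⟩, rfl⟩
      exact ⟨ofDigits 2 t, by omega, t, ⟨ht, rfl⟩, by omega, rfl⟩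
    · rintro ⟨m, hm, t, ⟨ht, rfl⟩, rfl, rfl⟩
      exact ⟨⟨by omega, ht⟩, by omega⟩

lemma seqParts_finite (n : ℕ) : (seqParts n).Finite := by
  induction n using Nat.strong_induction_on with
  | _ n ih =>
    rcases eq_or_ne n 0 with rfl | hn
    · simp [seqParts_zero]
    rw [seqParts_eq_biUnion hn]
    exact (Finset.range _).finite_toSet.biUnion fun m hm =>
      (ih m (by have := Finset.mem_range.mp hm; omega)).image _

lemma pairwiseDisjoint_image_cons_seqParts (s : Set ℕ) (f : ℕ → ℕ) :
    s.PairwiseDisjoint fun m => List.cons (f m) '' seqParts m := by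
  intro m _ m' _ hne
  rw [Function.onFun, Set.disjoint_left]
  rintro _ ⟨t, ht, rfl⟩ ⟨t', ht', heq⟩
  obtain ⟨-, rfl⟩ := List.cons.inj heq
  exact hne (ht.2.symm.trans ht'.2)

end SeqPartCount

open SeqPartCount in
theorem seqPartCount_sum_general (n : ℕ) :
    seqPartCount n = ∑ i ∈ Finset.range ((n - 1) / 2 + 1), seqPartCount i := by
  rcases eq_or_ne n 0 with rfl | hn
  · simp
  rw [seqPartCount_eq_ncard_seqParts, seqParts_eq_biUnion hn, ← Finset.set_biUnion_coe,
    Set.Finite.ncard_biUnion (Finset.finite_toSet _) (fun m _ => (seqParts_finite m).image _)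
      (pairwiseDisjoint_image_cons_seqParts _ _), finsum_mem_coe_finset]
  refine Finset.sum_congr rfl fun m _ => ?_
  rw [Set.ncard_image_of_injective _ List.cons_injective, seqPartCount_eq_ncard_seqParts]

/-- For every `n ≥ 3`, the number of partitions of `n` into sequential powers of `2`
satisfies `d(n) = Σ_{i=0}^{⌊(n−1)/2⌋} d(i)`. -/
theorem seqPartCount_sum (n : ℕ) (hn : 3 ≤ n) :
    seqPartCount n = ∑ i ∈ Finset.range ((n - 1) / 2 + 1), seqPartCount i :=
  seqPartCount_sum_general n
end
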